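/- Let n ≥ 1, k ≥ 1, and let h : E(K_{n,n}) → ℝ^k satisfy ‖h(e)‖₁ ≤ 1 for all edges e. Then there is an edge-weighting w : E(K_{n,n}) → [0,1] such that Σ_e w(e)·h(e) = (1/n)·h(K_{n,n}), and the subgraph of K_{n,n} consisting of all edges e with 0 < w(e) < 1 has cyclomatic number at most k. -/

import Mathlib

/-!
Start from the constant weighting `1 / n`, which has the required sums. While more than `k` edges
are fractional, their vectors `h e ∈ ℝ^k` are linearly dependent; moving the fractional weights along
such a dependency preserves the sums, and the largest step that stays inside `[0, 1]` makes at least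
one fractional weight integral. Hence some admissible weighting has at most `k` fractional edges,
and a graph with at most `k` edges on `2n` vertices has cyclomatic number at most `k`.
-/

open Finset

section Rounding

variable {α ι : Type*} [Fintype ι]

noncomputable def fractionalSupport (E : Finset α) (w : α → ℝ) : Finset α :=
  E.filter fun e => 0 < w e ∧ w e < 1

lemma exists_relation_supported_of_card_lt (h : α → ι → ℝ) {F : Finset α}
    (hF : Fintype.card ι < #F) :
    ∃ x : α → ℝ, (∀ e ∉ F, x e = 0) ∧ (∃ e ∈ F, x e ≠ 0) ∧
      ∀ i, ∑ e ∈ F, x e * h e i = 0 := by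
  classical
  have hdep : ¬ LinearIndepOn ℝ h (F : Set α) := fun hli => by
    have := hli.fintype_card_le_finrank
    simp only [Finset.coe_sort_coe, Fintype.card_coe, Module.finrank_fintype_fun_eq_card] at this
    omega
  obtain ⟨f, hf, e, he, hfe⟩ := not_linearIndepOn_finset_iff.mp hdep
  refine ⟨fun e => if e ∈ F then f e else 0, fun e he => if_neg he, ⟨e, he, by simpa [he]⟩,
    fun i => ?_⟩
  have hfi := congrFun hf i
  simp only [Finset.sum_apply, Pi.smul_apply, smul_eq_mul, Pi.zero_apply] at hfi
  rw [← hfi]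
  exact Finset.sum_congr rfl fun e he => by simp only [he, if_true]

/-- The time `t ≥ 0` at which `a + t * b` leaves `[0, 1]`. -/
noncomputable def exitTime (a b : ℝ) : ℝ := if 0 < b then (1 - a) / b else -a / b

lemma exitTime_pos {a b : ℝ} (ha : a ∈ Set.Ioo 0 1) (hb : b ≠ 0) : 0 < exitTime a b := by
  obtain ⟨ha0, ha1⟩ := ha
  unfold exitTime
  split_ifs with hpos
  · exact div_pos (by linarith) hpos
  · exact div_pos_of_neg_of_neg (by linarith) (lt_of_le_of_ne (not_lt.mp hpos) hb)

lemma add_mul_mem_Icc_of_le_exitTime {a b t : ℝ} (ha : a ∈ Set.Icc 0 1) (hb : b ≠ 0)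
    (ht0 : 0 ≤ t) (ht : t ≤ exitTime a b) : a + t * b ∈ Set.Icc 0 1 := by
  obtain ⟨ha0, ha1⟩ := ha
  unfold exitTime at ht
  split_ifs at ht with hpos
  · rw [le_div_iff₀ hpos] at ht
    constructor <;> nlinarith
  · rw [le_div_iff_of_neg (lt_of_le_of_ne (not_lt.mp hpos) hb)] at ht
    constructor <;> nlinarith

lemma add_exitTime_mul_eq_zero_or_one (a : ℝ) {b : ℝ} (hb : b ≠ 0) :
    a + exitTime a b * b = 0 ∨ a + exitTime a b * b = 1 := by
  unfold exitTime
  split_ifs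
  · right; field_simp; ring
  · left; field_simp; ring

variable [DecidableEq α]

lemma exists_card_fractionalSupport_lt (h : α → ι → ℝ) {E : Finset α} {w : α → ℝ}
    (hw : ∀ e ∈ E, w e ∈ Set.Icc 0 1) (hcard : Fintype.card ι < #(fractionalSupport E w)) :
    ∃ w' : α → ℝ, (∀ e ∈ E, w' e ∈ Set.Icc 0 1) ∧
      (∀ i, ∑ e ∈ E, w' e * h e i = ∑ e ∈ E, w e * h e i) ∧
      #(fractionalSupport E w') < #(fractionalSupport E w) := by
  set F := fractionalSupport E w
  have hFE : F ⊆ E := filter_subset _ _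
  obtain ⟨x, hxF, ⟨e₁, he₁F, he₁⟩, hx⟩ := exists_relation_supported_of_card_lt h hcard
  set S := F.filter fun e => x e ≠ 0
  have hS : S.Nonempty := ⟨e₁, mem_filter.mpr ⟨he₁F, he₁⟩⟩
  set t := S.inf' hS fun e => exitTime (w e) (x e)
  have ht : 0 < t := (lt_inf'_iff hS).mpr fun e he =>
    exitTime_pos (mem_filter.mp (mem_filter.mp he).1).2 (mem_filter.mp he).2
  obtain ⟨e₀, he₀S, he₀⟩ := exists_mem_eq_inf' hS fun e => exitTime (w e) (x e)
  obtain ⟨he₀F, he₀x⟩ := mem_filter.mp he₀S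
  set w' := fun e => w e + t * x e
  have hw'_of_not_mem : ∀ e ∉ S, w' e = w e := fun e he => by
    have : x e = 0 := by
      by_contra hxe
      exact he (mem_filter.mpr ⟨by_contra fun heF => hxe (hxF e heF), hxe⟩)
    simp [w', this]
  refine ⟨w', fun e he => ?_, fun i => ?_, ?_⟩
  · by_cases heS : e ∈ S
    · exact add_mul_mem_Icc_of_le_exitTime (hw e he) (mem_filter.mp heS).2 ht.le
        (inf'_le _ heS)
    · rw [hw'_of_not_mem e heS]; exact hw e he
  · have hxE : ∑ e ∈ E, x e * h e i = 0 := by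
      rw [← sum_subset hFE fun e _ he => by rw [hxF e he, zero_mul]]; exact hx i
    simp only [w', add_mul, sum_add_distrib, mul_assoc, ← mul_sum, hxE, mul_zero, add_zero]
  · refine card_lt_card (ssubset_of_subset_of_ssubset (s₂ := F.erase e₀) ?_
      (erase_ssubset he₀F))
    intro e he
    obtain ⟨heE, hfrac⟩ := mem_filter.mp he
    refine mem_erase.mpr ⟨?_, ?_⟩
    · rintro rfl
      have := add_exitTime_mul_eq_zero_or_one (w e) he₀x
      rw [← he₀] at this
      rcases this with h0 | h1
      · exact hfrac.1.ne' h0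
      · exact hfrac.2.ne h1
    · by_cases heS : e ∈ S
      · exact (mem_filter.mp heS).1
      · rw [hw'_of_not_mem e heS] at hfrac
        exact mem_filter.mpr ⟨heE, hfrac⟩

theorem exists_card_fractionalSupport_le (h : α → ι → ℝ) {E : Finset α} {w : α → ℝ}
    (hw : ∀ e ∈ E, w e ∈ Set.Icc 0 1) :
    ∃ w' : α → ℝ, (∀ e ∈ E, w' e ∈ Set.Icc 0 1) ∧
      (∀ i, ∑ e ∈ E, w' e * h e i = ∑ e ∈ E, w e * h e i) ∧
      #(fractionalSupport E w') ≤ Fintype.card ι := by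
  induction hN : #(fractionalSupport E w) using Nat.strong_induction_on generalizing w with
  | _ N ih =>
    by_cases hcard : #(fractionalSupport E w) ≤ Fintype.card ι
    · exact ⟨w, hw, fun _ => rfl, hcard⟩
    obtain ⟨w₁, hw₁, hsum₁, hlt⟩ := exists_card_fractionalSupport_lt h hw (not_le.mp hcard)
    obtain ⟨w₂, hw₂, hsum₂, hcard₂⟩ := ih _ (hN ▸ hlt) hw₁ rfl
    exact ⟨w₂, hw₂, fun i => (hsum₂ i).trans (hsum₁ i), hcard₂⟩

end Rounding

namespace SimpleGraph

variable {V : Type*}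

lemma edgeSet_fromEdgeSet_of_subset {G : SimpleGraph V} {s : Set (Sym2 V)} (hs : s ⊆ G.edgeSet) :
    (fromEdgeSet s).edgeSet = s := by
  rw [edgeSet_fromEdgeSet, sdiff_eq_left]
  exact Set.subset_compl_iff_disjoint_right.mp (hs.trans G.edgeSet_subset_compl_diagSet)

lemma card_connectedComponent_le [Finite V] (G : SimpleGraph V) :
    Nat.card G.ConnectedComponent ≤ Nat.card V :=
  Nat.card_le_card_of_surjective G.connectedComponentMk fun c => c.exists_rep

end SimpleGraph

theorem stmt_8_general (n k : ℕ) (hn : 1 ≤ n)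
    (h : Sym2 (Fin n ⊕ Fin n) → Fin k → ℝ) :
    ∃ w : Sym2 (Fin n ⊕ Fin n) → ℝ,
      (∀ e ∈ (completeBipartiteGraph (Fin n) (Fin n)).edgeSet, 0 ≤ w e ∧ w e ≤ 1) ∧
      (∀ i : Fin k,
        ∑ e ∈ (completeBipartiteGraph (Fin n) (Fin n)).edgeSet.toFinite.toFinset, w e * h e i =
          (1 / (n : ℝ)) *
            ∑ e ∈ (completeBipartiteGraph (Fin n) (Fin n)).edgeSet.toFinite.toFinset, h e i) ∧
      (SimpleGraph.fromEdgeSet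
            {e ∈ (completeBipartiteGraph (Fin n) (Fin n)).edgeSet |
              0 < w e ∧ w e < 1}).edgeSet.ncard +
          Nat.card (SimpleGraph.fromEdgeSet
            {e ∈ (completeBipartiteGraph (Fin n) (Fin n)).edgeSet |
              0 < w e ∧ w e < 1}).ConnectedComponent
        ≤ k + 2 * n := by
  set G := completeBipartiteGraph (Fin n) (Fin n)
  set E := G.edgeSet.toFinite.toFinset
  have hw₀ : ∀ e ∈ E, (n : ℝ)⁻¹ ∈ Set.Icc 0 1 := fun _ _ =>
    ⟨by positivity, inv_le_one_of_one_le₀ (by exact_mod_cast hn)⟩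
  obtain ⟨w, hw, hsum, hcard⟩ := exists_card_fractionalSupport_le h hw₀
  refine ⟨w, fun e he => hw e (by simpa [E] using he), fun i => by rw [hsum, one_div, mul_sum], ?_⟩
  have hfrac : {e ∈ G.edgeSet | 0 < w e ∧ w e < 1} = ↑(fractionalSupport E w) := by
    ext e; simp [fractionalSupport, E]
  have hedges :
      (SimpleGraph.fromEdgeSet {e ∈ G.edgeSet | 0 < w e ∧ w e < 1}).edgeSet.ncard ≤ k := by
    rw [SimpleGraph.edgeSet_fromEdgeSet_of_subset (Set.sep_subset _ _), hfrac,
      Set.ncard_coe_finset, ← Fintype.card_fin k]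
    exact hcard
  have hcomp :=
    (SimpleGraph.fromEdgeSet {e ∈ G.edgeSet | 0 < w e ∧ w e < 1}).card_connectedComponent_le
  rw [Nat.card_sum, Nat.card_fin, ← two_mul] at hcomp
  omega

/-- the linear relaxation lemma for `K_{n,n}`: there is an edge-weighting
`w : E(K_{n,n}) → [0,1]` with `∑_e w(e)h(e) = (1/n)·h(K_{n,n})` whose fractional part
(the subgraph of edges with `0 < w(e) < 1`) has cyclomatic number at most `k`. -/
theorem stmt_8 (n k : ℕ) (hn : 1 ≤ n) (hk : 1 ≤ k)
    (h : Sym2 (Fin n ⊕ Fin n) → Fin k → ℝ)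
    (hh : ∀ e ∈ (completeBipartiteGraph (Fin n) (Fin n)).edgeSet, ∑ i : Fin k, |h e i| ≤ 1) :
    ∃ w : Sym2 (Fin n ⊕ Fin n) → ℝ,
      (∀ e ∈ (completeBipartiteGraph (Fin n) (Fin n)).edgeSet, 0 ≤ w e ∧ w e ≤ 1) ∧
      (∀ i : Fin k,
        ∑ e ∈ (completeBipartiteGraph (Fin n) (Fin n)).edgeSet.toFinite.toFinset, w e * h e i =
          (1 / (n : ℝ)) *
            ∑ e ∈ (completeBipartiteGraph (Fin n) (Fin n)).edgeSet.toFinite.toFinset, h e i) ∧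
      (SimpleGraph.fromEdgeSet
            {e ∈ (completeBipartiteGraph (Fin n) (Fin n)).edgeSet |
              0 < w e ∧ w e < 1}).edgeSet.ncard +
          Nat.card (SimpleGraph.fromEdgeSet
            {e ∈ (completeBipartiteGraph (Fin n) (Fin n)).edgeSet |
              0 < w e ∧ w e < 1}).ConnectedComponent
        ≤ k + 2 * n :=
  stmt_8_general n k hn h
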